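/- arXiv:0709.0400 — 3 statements merged into one kernel-verified Lean document; each statement's English description precedes it below -/
import Mathlib

section
/- Discrete Euler–Lagrange equation: Let L : ℤ × ℝ × ℝ → ℝ be C¹ in its last two arguments. If q : ℤ → ℝ minimizes I[q] = ∑_{t=a}^{b−1} L(t, q(t+1), q(t+1) − q(t)) over all sequences with fixed endpoints q(a) = q_a, q(b) = q_b, then for all t with a ≤ t ≤ b−2: ∂₃L(t+1, q(t+2), Δq(t+1)) − ∂₃L(t, q(t+1), Δq(t)) = ∂₂L(t, q(t+1), Δq(t)), where Δq(t) = q(t+1) − q(t). -/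
/-!
Changing the minimizer `q` at a single interior node `t + 1` keeps the endpoints and changes only
the two terms of the action with indices `t` and `t + 1`. Their sum, as a function of the value at
the node, is therefore differentiable with a global minimum at `q (t + 1)`; its vanishing
derivative, computed by the chain rule from the partial derivatives of `L`, is the
Euler–Lagrange equation.
-/

open Finset Function

section PartialDerivatives

variable {𝕜 : Type*} [NontriviallyNormedField 𝕜] {E : Type*} [NormedAddCommGroup E]
  [NormedSpace 𝕜 E] {F : 𝕜 × 𝕜 → E} {D : 𝕜 × 𝕜 →L[𝕜] E} {x y : 𝕜}

theorem HasFDerivAt.hasDerivAt_partial_fst (h : HasFDerivAt F D (x, y)) :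
    HasDerivAt (fun u => F (u, y)) (D (1, 0)) x :=
  h.comp_hasDerivAt x ((hasDerivAt_id x).prodMk (hasDerivAt_const x y))

theorem HasFDerivAt.hasDerivAt_partial_snd (h : HasFDerivAt F D (x, y)) :
    HasDerivAt (fun v => F (x, v)) (D (0, 1)) y :=
  h.comp_hasDerivAt y ((hasDerivAt_const y x).prodMk (hasDerivAt_id y))

theorem DifferentiableAt.hasDerivAt_comp_prodMk {f g : 𝕜 → 𝕜} {f' g' t : 𝕜}
    (hF : DifferentiableAt 𝕜 F (f t, g t)) (hf : HasDerivAt f f' t) (hg : HasDerivAt g g' t) :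
    HasDerivAt (fun s => F (f s, g s))
      (f' • deriv (fun u => F (u, g t)) (f t) + g' • deriv (fun v => F (f t, v)) (g t)) t := by
  have hD := hF.hasFDerivAt
  rw [hD.hasDerivAt_partial_fst.deriv, hD.hasDerivAt_partial_snd.deriv, ← map_smul, ← map_smul,
    ← map_add]
  convert hD.comp_hasDerivAt t (hf.prodMk hg) using 2
  · rfl
  · ext <;> simp

end PartialDerivatives

section DiscreteAction

variable (L : ℤ → ℝ → ℝ → ℝ) (a b : ℤ) (q : ℤ → ℝ)

noncomputable def action : ℝ :=
  ∑ t ∈ Ico a b, L t (q (t + 1)) (q (t + 1) - q t)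

def nodeAction (t : ℤ) (x : ℝ) : ℝ :=
  L t x (x - q t) + L (t + 1) (q (t + 2)) (q (t + 2) - x)

variable {L a b q} {t : ℤ}

theorem action_update_sub_action (hat : a ≤ t) (htb : t + 2 ≤ b) (x : ℝ) :
    action L a b (update q (t + 1) x) - action L a b q =
      nodeAction L q t x - nodeAction L q t (q (t + 1)) := by
  unfold action nodeAction
  rw [← sum_sub_distrib, sum_eq_add_of_mem t (t + 1) (mem_Ico.2 ⟨hat, by omega⟩)
    (mem_Ico.2 ⟨by omega, by omega⟩) (by omega)]
  · have htt : t + 1 + 1 = t + 2 := by ring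
    simp only [htt, update_self, update_of_ne (show t ≠ t + 1 by omega),
      update_of_ne (show t + 2 ≠ t + 1 by omega)]
    ring
  · intro c _ ⟨hct, hct1⟩
    rw [update_of_ne hct1, update_of_ne (show c + 1 ≠ t + 1 by omega), sub_self]

theorem nodeAction_self_le
    (hmin : ∀ r : ℤ → ℝ, r a = q a → r b = q b → action L a b q ≤ action L a b r)
    (hat : a ≤ t) (htb : t + 2 ≤ b) (x : ℝ) :
    nodeAction L q t (q (t + 1)) ≤ nodeAction L q t x := by
  have hvar := hmin (update q (t + 1) x) (update_of_ne (by omega) _ _)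
    (update_of_ne (by omega) _ _)
  linarith [action_update_sub_action (L := L) (q := q) hat htb x]

theorem hasDerivAt_nodeAction (hL : ∀ s, Differentiable ℝ fun p : ℝ × ℝ => L s p.1 p.2)
    (x : ℝ) :
    HasDerivAt (nodeAction L q t)
      (deriv (fun u => L t u (x - q t)) x + deriv (fun v => L t x v) (x - q t) -
        deriv (fun v => L (t + 1) (q (t + 2)) v) (q (t + 2) - x)) x := by
  have hcur := (hL t (x, x - q t)).hasDerivAt_comp_prodMk (hasDerivAt_id' x)
    ((hasDerivAt_id' x).sub_const (q t))
  have hnext := (hL (t + 1) (q (t + 2), q (t + 2) - x)).hasDerivAt_comp_prodMk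
    (hasDerivAt_const x (q (t + 2))) ((hasDerivAt_id' x).const_sub (q (t + 2)))
  refine (hcur.add hnext).congr_deriv ?_
  simp only [smul_eq_mul]
  ring

end DiscreteAction

/-- Discrete Euler–Lagrange equation on 𝕋 = ℤ: a minimizer of
`I[q] = ∑_{t=a}^{b-1} L(t, q(t+1), q(t+1)-q(t))` with fixed endpoints satisfies
`∂₃L(t+1, q(t+2), Δq(t+1)) - ∂₃L(t, q(t+1), Δq(t)) = ∂₂L(t, q(t+1), Δq(t))`
for `a ≤ t ≤ b - 2`. -/
theorem discrete_euler_lagrange (a b : ℤ) (qa qb : ℝ)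
    (L : ℤ → ℝ → ℝ → ℝ)
    (hL : ∀ t : ℤ, ContDiff ℝ 1 (fun p : ℝ × ℝ => L t p.1 p.2))
    (q : ℤ → ℝ) (hqa : q a = qa) (hqb : q b = qb)
    (hmin : ∀ r : ℤ → ℝ, r a = qa → r b = qb →
      ∑ t ∈ Finset.Ico a b, L t (q (t + 1)) (q (t + 1) - q t) ≤
        ∑ t ∈ Finset.Ico a b, L t (r (t + 1)) (r (t + 1) - r t)) :
    ∀ t : ℤ, a ≤ t → t ≤ b - 2 →
      deriv (fun v => L (t + 1) (q (t + 2)) v) (q (t + 2) - q (t + 1)) -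
          deriv (fun v => L t (q (t + 1)) v) (q (t + 1) - q t) =
        deriv (fun u => L t u (q (t + 1) - q t)) (q (t + 1)) := by
  intro t hat htb
  have hnode : IsLocalMin (nodeAction L q t) (q (t + 1)) :=
    Filter.Eventually.of_forall <| nodeAction_self_le
      (fun r hra hrb => hmin r (hra.trans hqa) (hrb.trans hqb)) hat (by omega)
  have hcrit := hnode.hasDerivAt_eq_zero
    (hasDerivAt_nodeAction (fun s => (hL s).differentiable one_ne_zero) (q (t + 1)))
  linarith
end

section
/- Noether's theorem without transforming time, discrete case: Let L : ℤ × ℝ × ℝ → ℝ be C¹ in the last two arguments and ξ : ℤ × ℝ → ℝ. Suppose q : ℤ → ℝ satisfies the discrete Euler–Lagrange equation ∂₃L(t+1, q(t+2), Δq(t+1)) − ∂₃L(t, q(t+1), Δq(t)) = ∂₂L(t, q(t+1), Δq(t)) and the invariance condition ∂₂L(t, q(t+1), Δq(t))·ξ(t+1, q(t+1)) + ∂₃L(t, q(t+1), Δq(t))·(ξ(t+1, q(t+1)) − ξ(t, q(t))) = 0 for all t in some interval of integers. Then C(t) = ∂₃L(t, q(t+1), Δq(t))·ξ(t, q(t))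 satisfies C(t+1) = C(t) for all t in that interval, i.e. C is a conservation law. -/
/-- Noether's theorem without transforming time on 𝕋 = ℤ: under the discrete
Euler–Lagrange equation and the invariance condition, the quantity
`C(t) = ∂₃L(t, q(t+1), Δq(t)) · ξ(t, q(t))` is a conservation law. -/
theorem discrete_noether_without_time (L : ℤ → ℝ → ℝ → ℝ) (ξ : ℤ → ℝ → ℝ)
    (q : ℤ → ℝ) (c d : ℤ)
    (hEL : ∀ t : ℤ, c ≤ t → t < d →
      deriv (fun v => L (t + 1) (q (t + 2)) v) (q (t + 2) - q (t + 1)) -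
          deriv (fun v => L t (q (t + 1)) v) (q (t + 1) - q t) =
        deriv (fun u => L t u (q (t + 1) - q t)) (q (t + 1)))
    (hinv : ∀ t : ℤ, c ≤ t → t < d →
      deriv (fun u => L t u (q (t + 1) - q t)) (q (t + 1)) * ξ (t + 1) (q (t + 1)) +
        deriv (fun v => L t (q (t + 1)) v) (q (t + 1) - q t) *
          (ξ (t + 1) (q (t + 1)) - ξ t (q t)) = 0) :
    ∀ t : ℤ, c ≤ t → t < d →
      deriv (fun v => L (t + 1) (q (t + 2)) v) (q (t + 2) - q (t + 1)) *
          ξ (t + 1) (q (t + 1)) =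
        deriv (fun v => L t (q (t + 1)) v) (q (t + 1) - q t) * ξ t (q t) := by
  intro t h1 h2
  linear_combination (ξ (t + 1) (q (t + 1))) * hEL t h1 h2 + hinv t h1 h2
end

section
/- Change of variables for sums as delta-integral substitution on ℤ: Let α : ℤ → ℤ be strictly increasing and let f : ℤ → ℝ. Then for integers a ≤ b, ∑_{t=a}^{b−1} f(α(t))·(α(t+1) − α(t)) = ∑_{s=α(a)}^{α(b)−1} f(ρ̄(s)), where ρ̄(s) = α(max{t : α(t) ≤ s}) is the largest point of the image time scale α(ℤ) not exceeding s. In particular, if f is constant on each interval [α(t), α(t+1)), then ∑_{t=a}^{b−1} f(α(t))(α(t+1) − α(t)) = ∑_{s=α(a)}^{α(b)−1} f(s). -/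
/-! The blocks `[α t, α (t + 1))`, `a ≤ t < b`, partition `[α a, α b)`, and on each block the
integrand equals `f (α t)`, so that block contributes `f (α t) * (α (t + 1) - α t)`. -/

open Finset

namespace Int

theorem sum_Ico_consecutive {M : Type*} [AddCommMonoid M] (g : ℤ → M) {l m n : ℤ}
    (hlm : l ≤ m) (hmn : m ≤ n) :
    ∑ s ∈ Ico l m, g s + ∑ s ∈ Ico m n, g s = ∑ s ∈ Ico l n, g s := by
  rw [← sum_union (Ico_disjoint_Ico_consecutive l m n), Ico_union_Ico_eq_Ico hlm hmn]

theorem sum_Ico_eq_mul_of_forall_eq {R : Type*} [Ring R] {g : ℤ → R} {c : R} {m n : ℤ}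
    (hmn : m ≤ n) (hg : ∀ s ∈ Ico m n, g s = c) :
    ∑ s ∈ Ico m n, g s = c * ((n : R) - m) := by
  rw [sum_congr rfl hg, sum_const, nsmul_eq_mul, Nat.cast_comm, ← Int.cast_natCast,
    Int.card_Ico_of_le _ _ hmn, Int.cast_sub]

theorem sum_sum_Ico_of_monotone {M : Type*} [AddCommMonoid M] {α : ℤ → ℤ} (hα : Monotone α)
    (g : ℤ → M) (a b : ℤ) :
    ∑ t ∈ Ico a b, ∑ s ∈ Ico (α t) (α (t + 1)), g s = ∑ s ∈ Ico (α a) (α b), g s := by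
  rcases le_total a b with hab | hba
  · induction b, hab using Int.leInduction with
    | base => simp
    | succ b hab ih =>
      rw [← sum_Ico_consecutive _ hab (by omega), ih, Ico_add_one_right_eq_Icc, Icc_self,
        sum_singleton, sum_Ico_consecutive _ (hα hab) (hα (by omega))]
  · simp [Ico_eq_empty_of_le hba, Ico_eq_empty_of_le (hα hba)]

theorem sum_mul_sub_eq_sum_Ico {R : Type*} [Ring R] {α : ℤ → ℤ} (hα : Monotone α)
    {F G : ℤ → R} (hFG : ∀ t s : ℤ, α t ≤ s → s < α (t + 1) → G s = F (α t)) (a b : ℤ) :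
    ∑ t ∈ Ico a b, F (α t) * ((α (t + 1) : R) - α t) = ∑ s ∈ Ico (α a) (α b), G s := by
  rw [← sum_sum_Ico_of_monotone hα]
  refine sum_congr rfl fun t _ => (sum_Ico_eq_mul_of_forall_eq (hα (by omega)) ?_).symm
  intro s hs
  exact hFG t s (mem_Ico.1 hs).1 (mem_Ico.1 hs).2

end Int

theorem delta_integral_substitution_int_general (α : ℤ → ℤ) (hα : StrictMono α)
    (f : ℤ → ℝ) (ρ : ℤ → ℤ)
    (hρ : ∀ s t : ℤ, α t ≤ s → s < α (t + 1) → ρ s = α t)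
    (a b : ℤ) :
    (∑ t ∈ Finset.Ico a b, f (α t) * ((α (t + 1) : ℝ) - α t)) =
      (∑ s ∈ Finset.Ico (α a) (α b), f (ρ s)) ∧
    ((∀ t s : ℤ, α t ≤ s → s < α (t + 1) → f s = f (α t)) →
      (∑ t ∈ Finset.Ico a b, f (α t) * ((α (t + 1) : ℝ) - α t)) =
        ∑ s ∈ Finset.Ico (α a) (α b), f s) :=
  ⟨Int.sum_mul_sub_eq_sum_Ico hα.monotone
      (fun t s h₁ h₂ => congrArg f (hρ s t h₁ h₂)) a b,
    fun hf => Int.sum_mul_sub_eq_sum_Ico hα.monotone hf a b⟩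

/-- Substitution formula `∫_a^b f(α(t)) α^Δ(t) Δt = ∫_{α(a)}^{α(b)} f(t̄) Δ̄t̄` on
𝕋 = ℤ: for a strictly increasing `α : ℤ → ℤ`,
`∑_{t=a}^{b-1} f(α(t))·(α(t+1) - α(t)) = ∑_{s=α(a)}^{α(b)-1} f(ρ̄(s))`, where
`ρ̄(s) = α(max {t : α(t) ≤ s})` is the largest point of the image time scale
`α(ℤ)` not exceeding `s`.  In particular, if `f` is constant on each interval
`[α(t), α(t+1))`, the right-hand side is `∑_{s=α(a)}^{α(b)-1} f(s)`. -/
theorem delta_integral_substitution_int (α : ℤ → ℤ) (hα : StrictMono α)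
    (f : ℤ → ℝ) (ρ : ℤ → ℤ)
    (hρ : ∀ s t : ℤ, α t ≤ s → s < α (t + 1) → ρ s = α t)
    (a b : ℤ) (hab : a ≤ b) :
    (∑ t ∈ Finset.Ico a b, f (α t) * ((α (t + 1) : ℝ) - α t)) =
      (∑ s ∈ Finset.Ico (α a) (α b), f (ρ s)) ∧
    ((∀ t s : ℤ, α t ≤ s → s < α (t + 1) → f s = f (α t)) →
      (∑ t ∈ Finset.Ico a b, f (α t) * ((α (t + 1) : ℝ) - α t)) =
        ∑ s ∈ Finset.Ico (α a) (α b), f s) :=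
  delta_integral_substitution_int_general α hα f ρ hρ a b
end
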